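/- Let G be a finite connected chordful simple graph with vertex set S. Then the removahedron Remo(𝓑(G)) equals the Minkowski sum Σ_P Δ_P over all vertex sets P of induced paths of G (including the singletons as trivial paths), each taken with coefficient 1, as an equality of subsets of ℝ^S. -/

import Mathlib

open Pointwise

/-- The graphical building set of a graph `G`: all nonempty subsets of vertices
inducing a connected subgraph of `G`. -/
def graphBuilding {V : Type*} (G : SimpleGraph V) : Set (Finset V) :=
  {B | B.Nonempty ∧ (G.induce (B : Set V)).Connected}

/-- `P` is the vertex set of an induced path of `G` from `s` to `t`: a path
such that the only edges of `G` between its vertices are the consecutive edges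
of the path (a single vertex is the trivial induced path from `s` to `s`). -/
def IsInducedPathSet {V : Type*} [DecidableEq V] (G : SimpleGraph V)
    (s t : V) (P : Finset V) : Prop :=
  ∃ p : G.Walk s t, p.IsPath ∧
    (∀ u v : V, u ∈ p.support → v ∈ p.support → G.Adj u v →
      s(u, v) ∈ p.edges) ∧
    P = p.support.toFinset

/-- The face `Δ_T = conv{e_t : t ∈ T}` of the standard simplex in `ℝ^V`. -/
noncomputable def simplexFace {V : Type*} [DecidableEq V] (T : Finset V) :
    Set (V → ℝ) :=
  convexHull ℝ {x : V → ℝ | ∃ t ∈ T, x = Pi.single t 1}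

/-- The removahedron of `𝓑`: the points of the hyperplane
`Σ_s x_s = C(|V|+1, 2)` satisfying `Σ_{b ∈ B} x_b ≥ C(|B|+1, 2)` for all
`B ∈ 𝓑`. -/
def Remo {V : Type*} [Fintype V] (𝓑 : Set (Finset V)) : Set (V → ℝ) :=
  {x : V → ℝ | (∑ s : V, x s) = ((Fintype.card V + 1).choose 2 : ℝ) ∧
    ∀ B ∈ 𝓑, ((B.card + 1).choose 2 : ℝ) ≤ ∑ b ∈ B, x b}

/-!
In a chordful graph two vertices `s`, `t` are joined by exactly one induced path (two distinct
ones would close up into a cycle whose clique gives a chord), and `s`, `t` can be read off its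
vertex set as the vertices with at most one neighbour in it. So the induced paths inside a
connected set `B` correspond to the unordered pairs of `B`, there are `C(|B|+1, 2)` of them, and
`Remo(𝓑(G))` is cut out by `x(S) = #paths` and `x(B) ≥ #{paths inside B}` for connected `B`;
splitting a set into its connected pieces extends the inequality to every subset.

For any family of nonempty sets `P`, the Minkowski sum `∑ Δ_P` is cut out by exactly these
conditions. One inclusion is immediate; for the other, a point outside is separated by a linear
form `w`, and `⟨w, x⟩ ≤ ∑_P max_P w` is proved by raising the lowest level of `w` step by step,
each step costing `x(C) ≥ #{P ⊆ C}` on the current lowest level set `C`.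
-/

namespace SimpleGraph

variable {V : Type*} {G : SimpleGraph V}

def IsChordful (G : SimpleGraph V) : Prop :=
  ∀ (v : V) (c : G.Walk v v), c.IsCycle → G.IsClique {x | x ∈ c.support}

namespace Walk

variable {u v w : V}

lemma IsChordless.reverse {p : G.Walk u v} (hp : p.IsChordless) : p.reverse.IsChordless := by
  rw [isChordless_iff_forall_mem_edges] at hp ⊢
  simp only [support_reverse, edges_reverse, List.mem_reverse]
  exact fun _ _ ha hb hab => hp ha hb hab

lemma IsPath.eq_of_mem_support_append {p : G.Walk u v} {q : G.Walk v w}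
    (h : (p.append q).IsPath) {x : V} (hxp : x ∈ p.support) (hxq : x ∈ q.support) : x = v := by
  have hnd := h.support_nodup
  rw [support_append, List.nodup_append'] at hnd
  rw [mem_support_iff] at hxq
  exact hxq.resolve_right fun hx => hnd.2.2 hxp hx

lemma IsChordless.of_append_left {p : G.Walk u v} {q : G.Walk v w}
    (h : (p.append q).IsPath) (hc : (p.append q).IsChordless) : p.IsChordless := by
  rw [isChordless_iff_forall_mem_edges] at hc ⊢
  intro a b ha hb hab
  have hab' := hc (by simp [ha]) (by simp [hb]) hab
  rw [edges_append, List.mem_append] at hab'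
  refine hab'.resolve_right fun he => hab.ne ?_
  rw [h.eq_of_mem_support_append ha (q.fst_mem_support_of_mem_edges he),
    h.eq_of_mem_support_append hb (q.snd_mem_support_of_mem_edges he)]

lemma IsChordless.of_append_right {p : G.Walk u v} {q : G.Walk v w}
    (h : (p.append q).IsPath) (hc : (p.append q).IsChordless) : q.IsChordless := by
  have h' : (q.reverse.append p.reverse).IsPath := by rwa [← reverse_append, isPath_reverse_iff]
  have hc' : (q.reverse.append p.reverse).IsChordless := by rw [← reverse_append]; exact hc.reverse
  simpa using (hc'.of_append_left h').reverse

lemma IsPath.eq_or_eq_iff_ncard_neighborSet_le_one {p : G.Walk u v} (hp : p.IsPath) :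
    w = u ∨ w = v ↔ w ∈ p.support ∧ (p.toSubgraph.neighborSet w).ncard ≤ 1 := by
  by_cases hnil : p.Nil
  · obtain rfl := hnil.eq
    rw [eq_nil_iff_nil.mpr hnil]
    simp [neighborSet_singletonSubgraph]
  constructor
  · rintro (rfl | rfl)
    · simp [hp.neighborSet_toSubgraph_startpoint hnil]
    · simp [hp.neighborSet_toSubgraph_endpoint hnil]
  · rintro ⟨hw, hle⟩
    by_contra! hne
    obtain ⟨i, rfl, hi⟩ := mem_support_iff_exists_getVert.mp hw
    have hi0 : i ≠ 0 := by rintro rfl; simp at hne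
    have hil : i < p.length := lt_of_le_of_ne hi (by rintro rfl; simp at hne)
    have := hp.ncard_neighborSet_toSubgraph_internal_eq_two hi0 hil
    omega

lemma IsChordless.toSubgraph_eq_induce {p : G.Walk u v} (hp : p.IsChordless) :
    p.toSubgraph = (⊤ : G.Subgraph).induce {x | x ∈ p.support} := by
  rw [← verts_toSubgraph, (isInduced_toSubgraph.mpr hp).induce_top_verts]

lemma IsChordless.exists_cons_of_adj {s : V} {q : G.Walk v w} (hq : q.IsPath)
    (hqc : q.IsChordless) (hs : s ∉ q.support) (hadj : ∃ x ∈ q.support, G.Adj s x) :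
    ∃ r : G.Walk s w, r.IsPath ∧ r.IsChordless ∧ r.support ⊆ s :: q.support := by
  induction q with
  | nil =>
    obtain ⟨x, hx, hsx⟩ := hadj
    simp only [support_nil, List.mem_singleton] at hx
    subst hx
    exact ⟨hsx.toWalk, by simp [hsx.ne], hsx.isChordless_toWalk, by simp⟩
  | @cons a b c h q' ih =>
    have hq' : q'.IsPath := (cons_isPath_iff _ _).mp hq |>.1
    have hq'c : q'.IsChordless := hqc.of_append_right (p := h.toWalk) hq
    by_cases! hfar : ∃ x ∈ q'.support, G.Adj s x
    · obtain ⟨r, hr, hrc, hrs⟩ := ih hq' hq'c (by simp_all) hfar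
      exact ⟨r, hr, hrc, List.Subset.trans hrs (by simp)⟩
    obtain ⟨x, hx, hsx⟩ := hadj
    have hsa : G.Adj s a := by
      simp only [support_cons, List.mem_cons] at hx
      rcases hx with rfl | hx
      · exact hsx
      · exact absurd hsx (hfar x hx)
    refine ⟨cons hsa (cons h q'), hq.cons hs, ?_, by simp⟩
    rw [isChordless_iff_forall_mem_edges] at hqc ⊢
    have hfar' : ∀ x ∈ q'.support, ¬G.Adj x s := fun x hx h => hfar x hx h.symm
    simp only [support_cons, edges_cons, List.mem_cons] at hqc ⊢
    rintro y z (rfl | rfl | hy) (rfl | rfl | hz) hyz <;>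
      grind [G.loopless.irrefl]

variable [DecidableEq V]

lemma IsChordless.takeUntil {p : G.Walk u v} (hp : p.IsPath) (hc : p.IsChordless)
    (hw : w ∈ p.support) : (p.takeUntil w hw).IsChordless := by
  rw [← p.take_spec hw] at hp hc
  exact hc.of_append_left hp

lemma IsChordless.dropUntil {p : G.Walk u v} (hp : p.IsPath) (hc : p.IsChordless)
    (hw : w ∈ p.support) : (p.dropUntil w hw).IsChordless := by
  rw [← p.take_spec hw] at hp hc
  exact hc.of_append_right hp

theorem IsPath.eq_of_isChordless (hG : G.IsChordful) {p q : G.Walk u v} (hp : p.IsPath)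
    (hq : q.IsPath) (hpc : p.IsChordless) (hqc : q.IsChordless) : p = q := by
  induction hn : p.length using Nat.strongRec generalizing u v with | ind n ih =>
  by_cases! hw : ∃ w, w ∈ p.support ∧ w ∈ q.support ∧ w ≠ u ∧ w ≠ v
  · obtain ⟨w, hwp, hwq, hwu, hwv⟩ := hw
    rw [← p.take_spec hwp, ← q.take_spec hwq,
      ih _ (hn ▸ length_takeUntil_lt_length hwp hwv) (hp.takeUntil hwp) (hq.takeUntil hwq)
        (hpc.takeUntil hp hwp) (hqc.takeUntil hq hwq) rfl,
      ih _ (hn ▸ length_dropUntil_lt_length hwp hwu) (hp.dropUntil hwp) (hq.dropUntil hwq)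
        (hpc.dropUntil hp hwp) (hqc.dropUntil hq hwq) rfl]
  by_cases hshort : p.length ≤ 1 ∧ q.length ≤ 1
  · exact eq_of_length_le_one hshort.1 hshort.2
  exfalso
  have hcyc : (p.append q.reverse).IsCycle := by
    refine hp.isCycle_append (isPath_reverse_iff q |>.mpr hq) (fun _ ↦ ?_) ?_
    · grind [dropLast_support_concat, IsPath.support_nodup, support_reverse, cons_tail_support]
    · grind [length_reverse]
  have huv : u ≠ v := by
    rintro rfl
    simp only [isPath_iff_nil, ← length_eq_zero_iff] at hp hq
    omega
  have hadj : G.Adj u v := hG u _ hcyc (by simp) (by simp) huv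
  have hp1 := hp.length_eq_one_of_mem_edges (hpc.mem_edges (by simp) (by simp) hadj)
  have hq1 := hq.length_eq_one_of_mem_edges (hqc.mem_edges (by simp) (by simp) hadj)
  omega

theorem exists_isPath_isChordless_support_subset (p : G.Walk u v) :
    ∃ q : G.Walk u v, q.IsPath ∧ q.IsChordless ∧ q.support ⊆ p.support := by
  induction p with
  | nil => exact ⟨nil, by simp, by simp [isChordless_iff_forall_mem_edges], by simp⟩
  | @cons a b c h p ih =>
    obtain ⟨q, hq, hqc, hqp⟩ := ih
    by_cases ha : a ∈ q.support
    · exact ⟨q.dropUntil a ha, hq.dropUntil ha, hqc.dropUntil hq ha,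
        fun x hx => List.mem_cons_of_mem _ (hqp (q.support_dropUntil_subset_support ha hx))⟩
    · obtain ⟨r, hr, hrc, hrq⟩ := hqc.exists_cons_of_adj hq ha ⟨b, q.start_mem_support, h⟩
      exact ⟨r, hr, hrc, List.Subset.trans hrq (List.cons_subset_cons _ hqp)⟩

end Walk

end SimpleGraph

open Finset SimpleGraph

section

variable {V : Type*} {G : SimpleGraph V}

lemma SimpleGraph.Walk.support_toFinset_mem_graphBuilding [DecidableEq V] {u v : V}
    (p : G.Walk u v) :
    p.support.toFinset ∈ graphBuilding G := by
  refine ⟨⟨u, by simp⟩, ?_⟩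
  rw [List.coe_toFinset]
  exact p.connected_induce_support

lemma singleton_mem_graphBuilding [DecidableEq V] (v : V) : {v} ∈ graphBuilding G := by
  simpa using (Walk.nil : G.Walk v v).support_toFinset_mem_graphBuilding

lemma union_mem_graphBuilding [DecidableEq V] {B C : Finset V} (hB : B ∈ graphBuilding G)
    (hC : C ∈ graphBuilding G) (hBC : (B ∩ C).Nonempty) : B ∪ C ∈ graphBuilding G :=
  ⟨hB.1.mono subset_union_left, by
    rw [coe_union]
    exact induce_union_connected hB.2.preconnected hC.2.preconnected
      (by rwa [← coe_inter, coe_nonempty])⟩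

lemma univ_mem_graphBuilding [Fintype V] (hG : G.Connected) : univ ∈ graphBuilding G :=
  ⟨univ_nonempty_iff.mpr hG.nonempty, by
    rw [coe_univ]
    exact (induceUnivIso G).connected_iff.mpr hG⟩

lemma exists_walk_support_subset_of_mem_graphBuilding {B : Finset V}
    (hB : B ∈ graphBuilding G) {s t : V} (hs : s ∈ B) (ht : t ∈ B) :
    ∃ p : G.Walk s t, ∀ x ∈ p.support, x ∈ B := by
  obtain ⟨q⟩ := hB.2.preconnected ⟨s, hs⟩ ⟨t, ht⟩
  let f : G.induce (B : Set V) →g G := (Embedding.induce (B : Set V)).toHom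
  refine ⟨q.map f, fun x hx => ?_⟩
  have hx' : x ∈ q.support.map f := by rwa [← q.support_map]
  obtain ⟨y, -, rfl⟩ := List.mem_map.mp hx'
  exact y.2

variable [DecidableEq V] {s t : V} {P : Finset V}

lemma isInducedPathSet_iff :
    IsInducedPathSet G s t P ↔
      ∃ p : G.Walk s t, p.IsPath ∧ p.IsChordless ∧ P = p.support.toFinset := by
  simp only [IsInducedPathSet, Walk.isChordless_iff_forall_mem_edges]

lemma IsInducedPathSet.symm (h : IsInducedPathSet G s t P) : IsInducedPathSet G t s P := by
  obtain ⟨p, hp, hpc, rfl⟩ := isInducedPathSet_iff.mp h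
  exact isInducedPathSet_iff.mpr ⟨p.reverse, hp.reverse, hpc.reverse, by simp⟩

lemma IsInducedPathSet.left_mem (h : IsInducedPathSet G s t P) : s ∈ P := by
  obtain ⟨p, -, -, rfl⟩ := h
  simp

lemma IsInducedPathSet.nonempty (h : IsInducedPathSet G s t P) : P.Nonempty := ⟨s, h.left_mem⟩

lemma IsInducedPathSet.mem_graphBuilding (h : IsInducedPathSet G s t P) :
    P ∈ graphBuilding G := by
  obtain ⟨p, -, -, rfl⟩ := h
  exact p.support_toFinset_mem_graphBuilding

lemma IsInducedPathSet.unique (hG : G.IsChordful) {P' : Finset V} (h : IsInducedPathSet G s t P)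
    (h' : IsInducedPathSet G s t P') : P = P' := by
  obtain ⟨p, hp, hpc, rfl⟩ := isInducedPathSet_iff.mp h
  obtain ⟨q, hq, hqc, rfl⟩ := isInducedPathSet_iff.mp h'
  rw [hp.eq_of_isChordless hG hq hpc hqc]

lemma IsInducedPathSet.sym2_eq {s' t' : V} (h : IsInducedPathSet G s t P)
    (h' : IsInducedPathSet G s' t' P) : s(s, t) = s(s', t') := by
  obtain ⟨p, hp, hpc, rfl⟩ := isInducedPathSet_iff.mp h
  obtain ⟨q, hq, hqc, hpq⟩ := isInducedPathSet_iff.mp h'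
  have hmem : ∀ x, x ∈ p.support ↔ x ∈ q.support := by simpa [Finset.ext_iff] using hpq
  have hsub : p.toSubgraph = q.toSubgraph := by
    rw [hpc.toSubgraph_eq_induce, hqc.toSubgraph_eq_induce]
    exact congrArg _ (Set.ext hmem)
  ext x
  rw [Sym2.mem_iff, Sym2.mem_iff, hp.eq_or_eq_iff_ncard_neighborSet_le_one,
    hq.eq_or_eq_iff_ncard_neighborSet_le_one, hsub, hmem]

lemma exists_isInducedPathSet_subset {B : Finset V} (hB : B ∈ graphBuilding G) (hs : s ∈ B)
    (ht : t ∈ B) : ∃ P, IsInducedPathSet G s t P ∧ P ⊆ B := by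
  obtain ⟨p, hpB⟩ := exists_walk_support_subset_of_mem_graphBuilding hB hs ht
  obtain ⟨q, hq, hqc, hqp⟩ := p.exists_isPath_isChordless_support_subset
  exact ⟨q.support.toFinset, isInducedPathSet_iff.mpr ⟨q, hq, hqc, rfl⟩,
    fun x hx => hpB x (hqp (List.mem_toFinset.mp hx))⟩

variable [Fintype V]

variable (G) in
open Classical in
noncomputable def inducedPathSets : Finset (Finset V) :=
  {P | ∃ s t, IsInducedPathSet G s t P}

lemma mem_inducedPathSets : P ∈ inducedPathSets G ↔ ∃ s t, IsInducedPathSet G s t P := by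
  simp [inducedPathSets]

theorem card_filter_inducedPathSets_subset (hG : G.IsChordful) {B : Finset V}
    (hB : B ∈ graphBuilding G) :
    #{P ∈ inducedPathSets G | P ⊆ B} = (#B + 1).choose 2 := by
  rw [← card_sym2]
  let R (P : Finset V) (z : Sym2 V) : Prop := ∃ s t, z = s(s, t) ∧ IsInducedPathSet G s t P
  apply le_antisymm
  · refine card_le_card_of_forall_subsingleton R ?_ ?_
    · intro P hP
      obtain ⟨⟨s, t, h⟩, hPB⟩ := by simpa [mem_inducedPathSets] using hP
      exact ⟨s(s, t), mk_mem_sym2_iff.mpr ⟨hPB h.left_mem, hPB h.symm.left_mem⟩, s, t, rfl, h⟩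
    · rintro z - P₁ ⟨-, s₁, t₁, rfl, h₁⟩ P₂ ⟨-, s₂, t₂, e, h₂⟩
      rcases Sym2.eq_iff.mp e with ⟨rfl, rfl⟩ | ⟨rfl, rfl⟩
      · exact h₁.unique hG h₂
      · exact h₁.unique hG h₂.symm
  · refine card_le_card_of_forall_subsingleton (fun z P => R P z) ?_ ?_
    · intro z hz
      induction z using Sym2.ind with | _ s t
      obtain ⟨hs, ht⟩ := mk_mem_sym2_iff.mp hz
      obtain ⟨P, hP, hPB⟩ := exists_isInducedPathSet_subset hB hs ht
      exact ⟨P, by simpa [mem_inducedPathSets, hPB] using ⟨s, t, hP⟩, s, t, rfl, hP⟩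
    · rintro P - z₁ ⟨-, s₁, t₁, rfl, h₁⟩ z₂ ⟨-, s₂, t₂, rfl, h₂⟩
      exact h₁.sym2_eq h₂

end

section

variable {V : Type*}

lemma isLinearMap_sum_apply (A : Finset V) : IsLinearMap ℝ fun y : V → ℝ => ∑ a ∈ A, y a :=
  ⟨fun y z => by simp [sum_add_distrib], fun c y => by simp [mul_sum]⟩

variable [DecidableEq V]

theorem card_filter_subset_le_sum_of_forall_building {𝓑 : Set (Finset V)}
    (h𝓑_singleton : ∀ v, {v} ∈ 𝓑)
    (h𝓑_union : ∀ B ∈ 𝓑, ∀ C ∈ 𝓑, (B ∩ C).Nonempty → B ∪ C ∈ 𝓑)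
    {𝓟 : Finset (Finset V)} (h𝓟 : ∀ P ∈ 𝓟, P.Nonempty ∧ P ∈ 𝓑) {x : V → ℝ}
    (hx : ∀ B ∈ 𝓑, (#{P ∈ 𝓟 | P ⊆ B} : ℝ) ≤ ∑ b ∈ B, x b) (A : Finset V) :
    (#{P ∈ 𝓟 | P ⊆ A} : ℝ) ≤ ∑ a ∈ A, x a := by
  classical
  induction A using Finset.strongInduction with | H A ih =>
  obtain rfl | ⟨a, ha⟩ := A.eq_empty_or_nonempty
  · simpa [filter_eq_empty_iff, subset_empty] using fun P hP => (h𝓟 P hP).1.ne_empty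
  -- a largest member of `𝓑` through `a` inside `A` swallows every member of `𝓑` it meets
  obtain ⟨B, hB, hBmax⟩ := exists_max_image {B ∈ A.powerset | a ∈ B ∧ B ∈ 𝓑} card
    ⟨{a}, by simpa [ha] using h𝓑_singleton a⟩
  simp only [mem_filter, mem_powerset] at hB hBmax
  obtain ⟨hBA, haB, hB𝓑⟩ := hB
  have hsplit : {P ∈ 𝓟 | P ⊆ A} ⊆ {P ∈ 𝓟 | P ⊆ B} ∪ {P ∈ 𝓟 | P ⊆ A \ B} := by
    intro P hP
    simp only [mem_filter, mem_union] at hP ⊢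
    by_cases hPB : (P ∩ B).Nonempty
    · have hle := hBmax (P ∪ B)
        ⟨union_subset hP.2 hBA, mem_union_right _ haB, h𝓑_union P (h𝓟 P hP.1).2 B hB𝓑 hPB⟩
      exact Or.inl ⟨hP.1, (eq_of_subset_of_card_le subset_union_right hle).symm ▸ subset_union_left⟩
    · exact Or.inr ⟨hP.1, subset_sdiff.mpr ⟨hP.2, disjoint_iff_inter_eq_empty.mpr
        (not_nonempty_iff_eq_empty.mp hPB)⟩⟩
  calc (#{P ∈ 𝓟 | P ⊆ A} : ℝ)
      ≤ #{P ∈ 𝓟 | P ⊆ B} + #{P ∈ 𝓟 | P ⊆ A \ B} := by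
        exact_mod_cast (card_le_card hsplit).trans (card_union_le _ _)
    _ ≤ ∑ b ∈ B, x b + ∑ b ∈ A \ B, x b :=
        add_le_add (hx B hB𝓑) (ih _ (sdiff_ssubset hBA ⟨a, haB⟩))
    _ = ∑ a ∈ A, x a := by rw [add_comm, sum_sdiff hBA]

lemma sum_eq_one_of_mem_simplexFace [Fintype V] {T : Finset V} {y : V → ℝ}
    (hy : y ∈ simplexFace T) : ∑ v, y v = 1 := by
  refine convexHull_min ?_ (convex_hyperplane (isLinearMap_sum_apply univ) 1) hy
  rintro _ ⟨t, -, rfl⟩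
  simp

lemma ite_le_sum_of_mem_simplexFace {T : Finset V} {y : V → ℝ} (hy : y ∈ simplexFace T)
    (A : Finset V) : (if T ⊆ A then 1 else 0 : ℝ) ≤ ∑ a ∈ A, y a := by
  refine convexHull_min ?_ (convex_halfSpace_ge (isLinearMap_sum_apply A) _) hy
  rintro _ ⟨t, ht, rfl⟩
  simp only [Set.mem_ofPred_eq, sum_pi_single']
  split_ifs with hTA hA
  · exact le_rfl
  · exact absurd (hTA ht) hA
  · exact zero_le_one
  · exact le_rfl

lemma isCompact_simplexFace (T : Finset V) : IsCompact (simplexFace T) :=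
  ((T.finite_toSet.image fun t => Pi.single t (1 : ℝ)).subset
    (by rintro _ ⟨t, ht, rfl⟩; exact ⟨t, ht, rfl⟩)).isCompact_convexHull (𝕜 := ℝ)

variable [Fintype V] {𝓟 : Finset (Finset V)} {x : V → ℝ}

/-- Raising the lowest level `m` of `w` to `b` adds `(b - m) x(C)` on the left and
`(b - m) #{P ⊆ C}` on the right, where `C` is the set on which `w = m`. -/
lemma sum_mul_le_sum_of_sum_max_mul_le_sum_max
    (hx : ∀ A : Finset V, (#{P ∈ 𝓟 | P ⊆ A} : ℝ) ≤ ∑ a ∈ A, x a)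
    {σ : Finset V → V} (hσ : ∀ P ∈ 𝓟, σ P ∈ P) {w : V → ℝ}
    (hw : ∀ P ∈ 𝓟, ∀ v ∈ P, w v ≤ w (σ P)) {m b : ℝ} (hm : ∀ v, m ≤ w v) (hmb : m < b)
    (hb : ∀ v, m < w v → b ≤ w v)
    (hmax : ∑ v, max (w v) b * x v ≤ ∑ P ∈ 𝓟, max (w (σ P)) b) :
    ∑ v, w v * x v ≤ ∑ P ∈ 𝓟, w (σ P) := by
  let C : Finset V := {v | w v ≤ m}
  have hmaxC : ∀ v, max (w v) b = w v + if v ∈ C then b - m else 0 := by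
    intro v
    by_cases hv : w v ≤ m
    · simp [C, le_antisymm hv (hm v), hmb.le]
    · simp [C, hv, hb v (not_le.mp hv)]
  have hσC : ∀ P ∈ 𝓟, (σ P ∈ C ↔ P ⊆ C) := fun P hP =>
    ⟨fun h v hv => by simp only [C, mem_filter_univ] at h ⊢; exact (hw P hP v hv).trans h,
      fun h => h (hσ P hP)⟩
  have hleft : ∑ v, max (w v) b * x v = ∑ v, w v * x v + (b - m) * ∑ v ∈ C, x v := by
    simp only [hmaxC, add_mul, sum_add_distrib, ite_mul, zero_mul, sum_ite_mem, univ_inter,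
      mul_sum]
  have hright : ∑ P ∈ 𝓟, max (w (σ P)) b =
      ∑ P ∈ 𝓟, w (σ P) + (b - m) * #{P ∈ 𝓟 | P ⊆ C} := by
    rw [sum_congr rfl fun P hP => by rw [hmaxC, if_congr (hσC P hP) rfl rfl], sum_add_distrib,
      sum_ite, sum_const_zero, add_zero, sum_const, nsmul_eq_mul, mul_comm]
  have hC : (b - m) * #{P ∈ 𝓟 | P ⊆ C} ≤ (b - m) * ∑ v ∈ C, x v :=
    mul_le_mul_of_nonneg_left (hx C) (sub_nonneg.mpr hmb.le)
  linarith

theorem sum_mul_le_sum_of_forall_card_filter_subset_le (hsum : ∑ v, x v = #𝓟)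
    (hx : ∀ A : Finset V, (#{P ∈ 𝓟 | P ⊆ A} : ℝ) ≤ ∑ a ∈ A, x a)
    {σ : Finset V → V} (hσ : ∀ P ∈ 𝓟, σ P ∈ P) {w : V → ℝ}
    (hw : ∀ P ∈ 𝓟, ∀ v ∈ P, w v ≤ w (σ P)) :
    ∑ v, w v * x v ≤ ∑ P ∈ 𝓟, w (σ P) := by
  obtain ⟨m, hm⟩ := (Set.finite_range w).bddBelow
  replace hm : ∀ v, m ≤ w v := fun v => hm ⟨v, rfl⟩
  induction hn : #{v | m < w v} using Nat.strongRec generalizing w m with | ind n ih =>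
  obtain hA | hA := ({v | m < w v} : Finset V).eq_empty_or_nonempty
  · have hwm : ∀ v, w v = m := fun v =>
      le_antisymm (not_lt.mp fun h => eq_empty_iff_forall_notMem.mp hA v (by simpa using h)) (hm v)
    simp [hwm, ← mul_sum, hsum, mul_comm]
  obtain ⟨a, haA, hamin⟩ := exists_min_image _ w hA
  simp only [mem_filter_univ] at haA hamin
  have hlt : #{v | w a < max (w v) (w a)} < n := by
    refine hn ▸ card_lt_card ⟨fun v => ?_, fun hsub => ?_⟩
    · simp only [mem_filter_univ, lt_max_iff, lt_irrefl, or_false]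
      exact haA.trans
    · simpa using hsub (mem_filter_univ a |>.mpr haA)
  exact sum_mul_le_sum_of_sum_max_mul_le_sum_max hx hσ hw hm haA hamin
    (ih _ hlt (fun P hP v hv => max_le_max (hw P hP v hv) le_rfl) (w a)
      (fun v => le_max_right _ _) rfl)

theorem mem_sum_simplexFace_iff (h𝓟 : ∀ P ∈ 𝓟, P.Nonempty) :
    x ∈ ∑ P ∈ 𝓟, simplexFace P ↔
      ∑ v, x v = #𝓟 ∧ ∀ A : Finset V, (#{P ∈ 𝓟 | P ⊆ A} : ℝ) ≤ ∑ a ∈ A, x a := by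
  constructor
  · intro hx
    obtain ⟨g, hg, rfl⟩ := (Set.mem_finsetSum _ _ _).mp hx
    refine ⟨?_, fun A => ?_⟩
    · simp only [Finset.sum_apply]
      rw [sum_comm, sum_congr rfl fun P hP => sum_eq_one_of_mem_simplexFace (hg hP)]
      simp
    · simp only [Finset.sum_apply]
      rw [sum_comm, ← sum_boole]
      exact sum_le_sum fun P hP => ite_le_sum_of_mem_simplexFace (hg hP) A
  rintro ⟨hsum, hx⟩
  by_contra hxQ
  obtain ⟨f, u, hfQ, hfx⟩ := geometric_hahn_banach_closed_point
    (convex_sum _ fun P _ => convex_convexHull ℝ _)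
    (sum_induction _ IsCompact (fun _ _ => IsCompact.add) (by simp)
      fun P _ => isCompact_simplexFace P).isClosed hxQ
  set w : V → ℝ := fun v => f (Pi.single v 1)
  have hfw : ∀ y, f y = ∑ v, w v * y v := fun y => by
    conv_lhs => rw [pi_eq_sum_univ' y]
    simp [w, mul_comm]
  cases isEmpty_or_nonempty V
  · obtain rfl : 𝓟 = ∅ :=
      eq_empty_of_forall_notMem fun P hP => (h𝓟 P hP).ne_empty P.eq_empty_of_isEmpty
    exact hxQ (by simp [Subsingleton.elim x 0])
  choose! σ hσ using fun P hP => exists_max_image P w (h𝓟 P hP)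
  have hq := hfQ _ (Set.finsetSum_mem_finsetSum 𝓟 _ (fun P => Pi.single (σ P) (1 : ℝ))
    fun P hP => subset_convexHull ℝ _ ⟨σ P, (hσ P hP).1, rfl⟩)
  rw [map_sum] at hq
  have hfx_le := sum_mul_le_sum_of_forall_card_filter_subset_le hsum hx (fun P hP => (hσ P hP).1)
    (fun P hP => (hσ P hP).2)
  rw [← hfw] at hfx_le
  linarith

end

/-- For a finite connected chordful graph `G`, the removahedron of the
graphical building set `𝓑(G)` equals the Minkowski sum, with all coefficients
equal to `1`, of the faces of the standard simplex corresponding to the vertex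
sets of all induced paths of `G` (including the singletons as trivial paths). -/
theorem remo_graphBuilding_eq_minkowski_sum_of_paths
    {V : Type*} [Fintype V] [DecidableEq V]
    (G : SimpleGraph V) (hG : G.Connected)
    (hchordful : ∀ (v : V) (c : G.Walk v v), c.IsCycle →
      G.IsClique {x | x ∈ c.support}) :
    Remo (graphBuilding G) =
      ∑ᶠ P ∈ {P : Finset V | ∃ s t : V, IsInducedPathSet G s t P},
        simplexFace P := by
  have hpaths : {P : Finset V | ∃ s t : V, IsInducedPathSet G s t P} = inducedPathSets G := by
    ext P
    simp [mem_inducedPathSets]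
  have hcard B (hB : B ∈ graphBuilding G) := card_filter_inducedPathSets_subset hchordful hB
  have hcard_univ : #(inducedPathSets G) = (Fintype.card V + 1).choose 2 := by
    simpa using hcard _ (univ_mem_graphBuilding hG)
  have h𝓟 : ∀ P ∈ inducedPathSets G, P.Nonempty ∧ P ∈ graphBuilding G := fun P hP => by
    obtain ⟨s, t, h⟩ := mem_inducedPathSets.mp hP
    exact ⟨h.nonempty, h.mem_graphBuilding⟩
  rw [hpaths, finsum_mem_coe_finset]
  ext x
  rw [mem_sum_simplexFace_iff fun P hP => (h𝓟 P hP).1]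
  simp only [Remo, Set.mem_ofPred_eq, hcard_univ]
  refine and_congr_right fun _ => ⟨fun hx A => ?_, fun hx B hB => hcard B hB ▸ hx B⟩
  exact card_filter_subset_le_sum_of_forall_building singleton_mem_graphBuilding
    (fun B hB C hC => union_mem_graphBuilding hB hC) h𝓟 (fun B hB => hcard B hB ▸ hx B hB) A
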